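/- arXiv:2203.12068 — 4 statements merged into one kernel-verified Lean document; each statement's English description precedes it below -/
import Mathlib

section
/- Let C be a small category satisfying the right Ore conditions. Then for every morphism g : y ⟶ x in C, the functor Over.map g : Over y ⥤ Over x, which sends an object h : z ⟶ y of Over y to h ≫ g : z ⟶ x, is an initial functor. In particular, for every functor F : Over x ⥤ D into a category D, a limit of F exists if and only if a limit of (Over.map g) ⋙ F exists, and in that case the canonical comparison morphism between them is an isomorphism. -/
open CategoryTheory CategoryTheory.Limits

universe v u

/-- If a small category `C` satisfies the right Ore conditions, then for every
morphism `g : y ⟶ x` the functor `Over.map g : Over y ⥤ Over x` is initial; in particular, for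
every functor `F : Over x ⥤ D`, a limit of `F` exists if and only if a limit of
`Over.map g ⋙ F` exists, and then the canonical comparison morphism is an isomorphism. -/
theorem overMap_initial_of_right_ore {C : Type*} [SmallCategory C]
    (ore1 : ∀ (x y₁ y₂ : C) (g₁ : y₁ ⟶ x) (g₂ : y₂ ⟶ x),
      ∃ (z : C) (h₁ : z ⟶ y₁) (h₂ : z ⟶ y₂), h₁ ≫ g₁ = h₂ ≫ g₂)
    (ore2 : ∀ (x y z : C) (h₁ h₂ : z ⟶ y) (g : y ⟶ x), h₁ ≫ g = h₂ ≫ g →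
      ∃ (w : C) (k : w ⟶ z), k ≫ h₁ = k ≫ h₂)
    {x y : C} (g : y ⟶ x) :
    (Over.map g).Initial ∧
      ∀ (D : Type u) [Category.{v} D] (F : Over x ⥤ D),
        (HasLimit F ↔ HasLimit (Over.map g ⋙ F)) ∧
        ∀ [HasLimit F] [HasLimit (Over.map g ⋙ F)],
          IsIso (limit.pre F (Over.map g)) := by
  have hInit : (Over.map g).Initial := by
    constructor
    intro b
    have hne : Nonempty (CostructuredArrow (Over.map g) b) := by
      obtain ⟨z, h₁, h₂, hh⟩ := ore1 x y b.left g b.hom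
      exact ⟨CostructuredArrow.mk (Y := Over.mk h₁)
        (Over.homMk h₂ (by simpa using hh.symm))⟩
    haveI := hne
    apply zigzag_isConnected
    intro j₁ j₂
    -- extract data
    obtain ⟨z, h₁, h₂, hh⟩ := ore1 b.left j₁.left.left j₂.left.left j₁.hom.left j₂.hom.left
    have e₁ : j₁.hom.left ≫ b.hom = j₁.left.hom ≫ g := Over.w j₁.hom
    have e₂ : j₂.hom.left ≫ b.hom = j₂.left.hom ≫ g := Over.w j₂.hom
    have heq : (h₁ ≫ j₁.left.hom) ≫ g = (h₂ ≫ j₂.left.hom) ≫ g := by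
      rw [Category.assoc, Category.assoc, ← e₁, ← e₂, ← Category.assoc, hh,
        Category.assoc]
    obtain ⟨w, k, hk⟩ := ore2 x y z (h₁ ≫ j₁.left.hom) (h₂ ≫ j₂.left.hom) g heq
    let a₀ : Over y := Over.mk (k ≫ h₁ ≫ j₁.left.hom)
    let j₀ : CostructuredArrow (Over.map g) b :=
      CostructuredArrow.mk (Y := a₀)
        (Over.homMk (k ≫ h₁ ≫ j₁.hom.left)
          (by simp [a₀, reassoc_of% e₁]))
    have f₁ : j₀ ⟶ j₁ := by
      refine CostructuredArrow.homMk (Over.homMk (k ≫ h₁) (by simp [j₀, a₀])) ?_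
      ext
      simp [j₀]
    have f₂ : j₀ ⟶ j₂ := by
      refine CostructuredArrow.homMk (Over.homMk (k ≫ h₂) ?_) ?_
      · simpa [j₀, a₀] using hk.symm
      · ext
        have : k ≫ h₁ ≫ j₁.hom.left = k ≫ h₂ ≫ j₂.hom.left := by rw [hh]
        simp [j₀, this]
    exact Relation.ReflTransGen.head (Or.inr ⟨f₁⟩)
      (Relation.ReflTransGen.single (Or.inl ⟨f₂⟩))
  haveI := hInit
  refine ⟨hInit, fun D _ F => ⟨⟨fun _ => inferInstance,
    fun h => by haveI := h; exact Functor.Initial.hasLimit_of_comp (Over.map g)⟩,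
    fun {_ _} => inferInstance⟩⟩
end

section
/- Let E and V be types equipped with the discrete topology and let r, s : E → V be maps (a directed graph with edge set E and vertex set V). Equip ℕ → E with the product topology and let P := {w : ℕ → E | ∀ n, s (w n) = r (w (n+1))}, the space of infinite paths, with the subspace topology. If every fiber r ⁻¹' {v} (v ∈ V) is a finite set, then: (a) for every v ∈ V the set {w ∈ P | r (w 0) = v} of infinite paths starting at v is compact; (b) P is a locally compact topological space. -/
/-- For a directed graph with discrete edge set `E`, discrete vertex set `V`,
and finite-to-one range map `r`, the space of infinite paths (a subspace of the product
`ℕ → E`) has compact sets of paths starting at each fixed vertex, and is locally compact. -/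
theorem infinite_path_space_locallyCompact
    {E V : Type*} [TopologicalSpace E] [DiscreteTopology E]
    [TopologicalSpace V] [DiscreteTopology V]
    (r s : E → V) (hfin : ∀ v : V, (r ⁻¹' {v}).Finite) :
    (∀ v : V,
      IsCompact {w : {w : ℕ → E // ∀ n, s (w n) = r (w (n + 1))} | r (w.1 0) = v}) ∧
    LocallyCompactSpace {w : ℕ → E // ∀ n, s (w n) = r (w (n + 1))} := by
  have key : ∀ v : V,
      IsCompact {w : {w : ℕ → E // ∀ n, s (w n) = r (w (n + 1))} | r (w.1 0) = v} := by
    intro v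
    rw [Topology.IsEmbedding.subtypeVal.isCompact_iff]
    set F : ℕ → Set E := fun n =>
      Nat.rec (r ⁻¹' {v}) (fun _ Fn => ⋃ e ∈ Fn, r ⁻¹' {s e}) n with hF
    have hFfin : ∀ n, (F n).Finite := by
      intro n
      induction n with
      | zero => exact hfin v
      | succ n ih => exact ih.biUnion (fun e _ => hfin (s e))
    have hcomp : IsCompact (Set.pi Set.univ F) :=
      isCompact_univ_pi fun n => (hFfin n).isCompact
    have himg : Subtype.val ''
        {w : {w : ℕ → E // ∀ n, s (w n) = r (w (n + 1))} | r (w.1 0) = v} =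
        {w : ℕ → E | (∀ n, s (w n) = r (w (n + 1))) ∧ r (w 0) = v} := by
      ext w
      constructor
      · rintro ⟨⟨w, hw⟩, hw0, rfl⟩
        exact ⟨hw, hw0⟩
      · rintro ⟨hw, hw0⟩
        exact ⟨⟨w, hw⟩, hw0, rfl⟩
    rw [himg]
    apply hcomp.of_isClosed_subset
    · have h1 : IsClosed {w : ℕ → E | ∀ n, s (w n) = r (w (n + 1))} := by
        have heq : {w : ℕ → E | ∀ n, s (w n) = r (w (n + 1))} =
            ⋂ n, {w : ℕ → E | s (w n) = r (w (n + 1))} := by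
          ext w; simp
        rw [heq]
        refine isClosed_iInter fun n => isClosed_eq ?_ ?_
        · exact continuous_of_discreteTopology.comp (continuous_apply n)
        · exact continuous_of_discreteTopology.comp (continuous_apply (n + 1))
      have h2 : IsClosed {w : ℕ → E | r (w 0) = v} :=
        isClosed_eq (continuous_of_discreteTopology.comp (continuous_apply 0))
          continuous_const
      exact h1.inter h2
    · rintro w ⟨hw, hw0⟩ n -
      induction n with
      | zero => exact hw0
      | succ n ih =>
        exact Set.mem_biUnion ih (by simpa using (hw n).symm)
  refine ⟨key, ?_⟩
  have : WeaklyLocallyCompactSpace {w : ℕ → E // ∀ n, s (w n) = r (w (n + 1))} := by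
    refine ⟨fun w => ⟨_, key (r (w.1 0)), ?_⟩⟩
    have hopen : IsOpen {x : {w : ℕ → E // ∀ n, s (w n) = r (w (n + 1))} |
        r (x.1 0) = r (w.1 0)} := by
      have hc : Continuous fun x : {w : ℕ → E // ∀ n, s (w n) = r (w (n + 1))} =>
          r (x.1 0) :=
        continuous_of_discreteTopology.comp
          ((continuous_apply 0).comp continuous_subtype_val)
      exact isOpen_discrete {r (w.1 0)} |>.preimage hc
    exact hopen.mem_nhds rfl
  infer_instance
end

section
/- Let Γ be a group acting on types E and V, let ρ : Γ → E → Γ satisfy ρ 1 e = 1 and ρ (g * h) e = ρ g (h • e) * ρ h e, and let r, s : E → V satisfy r (g • e) = g • r e and s (g • e) = (ρ g e) • s e for all g ∈ Γ, e ∈ E. Let σ : Γ → List E → List E and P : Γ → List E → Γ satisfy the word recursions σ g [] = [], σ g (e :: w) = (g • e) :: σ (ρ g e) w, P g [] = g, P g (e :: w) = P (ρ g e) w. Then for every g ∈ Γ and every list w of edges satisfying the path condition List.Chain' (fun e f => s e = r f) w: the list σ g w again satisfies the path condition; moreover, if w is nonempty then the range of the first edge of σ g w equals g • (range of the first edge of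 w), and the source of the last edge of σ g w equals (P g w) • (source of the last edge of w). -/
/-- For a self-similar graph action of a group `Γ` on edges `E` and vertices
`V` (with cocycle `ρ`, and range/source maps satisfying `r (g • e) = g • r e` and
`s (g • e) = (ρ g e) • s e`), the word extension `σ` preserves the path condition; the range of
the first edge of `σ g w` is `g • (range of the first edge of w)` and the source of the last
edge of `σ g w` is `(P g w) • (source of the last edge of w)`. -/
theorem selfSimilar_graph_action_preserves_paths
    {Γ E V : Type*} [Group Γ] [MulAction Γ E] [MulAction Γ V]
    (ρ : Γ → E → Γ)
    (hρ1 : ∀ e : E, ρ 1 e = 1)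
    (hρm : ∀ (g h : Γ) (e : E), ρ (g * h) e = ρ g (h • e) * ρ h e)
    (r s : E → V)
    (hr : ∀ (g : Γ) (e : E), r (g • e) = g • r e)
    (hs : ∀ (g : Γ) (e : E), s (g • e) = (ρ g e) • s e)
    (σ : Γ → List E → List E) (P : Γ → List E → Γ)
    (hσnil : ∀ g : Γ, σ g [] = [])
    (hσcons : ∀ (g : Γ) (e : E) (w : List E), σ g (e :: w) = (g • e) :: σ (ρ g e) w)
    (hPnil : ∀ g : Γ, P g [] = g)
    (hPcons : ∀ (g : Γ) (e : E) (w : List E), P g (e :: w) = P (ρ g e) w) :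
    ∀ (g : Γ) (w : List E), List.Chain' (fun e f => s e = r f) w →
      List.Chain' (fun e f => s e = r f) (σ g w) ∧
      (σ g w).head?.map r = w.head?.map (fun e => g • r e) ∧
      (σ g w).getLast?.map s = w.getLast?.map (fun e => (P g w) • s e) := by
  intro g w
  induction w generalizing g with
  | nil => intro _; simp [hσnil, hPnil, List.Chain']
  | cons e w ih =>
    intro hch
    simp only [List.Chain', List.isChain_cons] at hch
    obtain ⟨hlink, hchw⟩ := hch
    obtain ⟨ih1, ih2, ih3⟩ := ih (ρ g e) hchw
    rw [hσcons, hPcons]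
    refine ⟨?_, ?_, ?_⟩
    · simp only [List.Chain', List.isChain_cons]
      refine ⟨?_, ih1⟩
      intro f hf
      rcases hh : (σ (ρ g e) w).head? with _ | f'
      · simp [hh] at hf
      · simp [hh] at hf
        subst hf
        rcases hw : w.head? with _ | e'
        · simp [hw, hh] at ih2
        · simp [hw, hh] at ih2
          rw [hs, ih2, hlink e' hw]
    · cases w with
      | nil => simp [hσnil, hr]
      | cons a t => rw [hσcons]; simp [hr]
    · cases w with
      | nil => simp [hσnil, hPnil, hs]
      | cons a t =>
        rw [hσcons] at ih3 ⊢
        simpa only [List.getLast?_cons_cons] using ih3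
end

section
/- Let B be a bicategory, let S be a type, let b be an object of B, and let X : S → (b ⟶ b) be a family of 1-morphisms from b to itself. Regard the free monoid FreeMonoid S as a one-object category SingleObj (FreeMonoid S), and regard this category as a bicategory via LocallyDiscrete. Then there exists a pseudofunctor F from LocallyDiscrete (SingleObj (FreeMonoid S)) to B such that F sends the unique object to b and such that, for every s ∈ S, the 1-morphism obtained by applying F to the generator FreeMonoid.of s is isomorphic to X s via an invertible 2-morphism of B (after transporting along the identification of the images of the object with b). -/
open CategoryTheory

/-- Transport of a 1-morphism (or any quiver arrow) along equalities of its endpoints. -/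
def homOfEq {B : Type*} [Quiver B] {a b a' b' : B} (f : a ⟶ b) (ha : a = a') (hb : b = b') :
    a' ⟶ b' :=
  ha ▸ hb ▸ f

section Aux

open Bicategory

variable {B : Type*} [Bicategory B]

private lemma FMD.eqToHom_wr {a b c : B} {f g : a ⟶ b} (h : f = g) (k : b ⟶ c) :
    eqToHom h ▷ k = eqToHom (by rw [h]) := by subst h; simp

variable {S : Type*} (b : B) (X : S → (b ⟶ b))

/-- Interpret a word as a composite of the generators. -/
@[reducible] private def FMD.mapL : List S → (b ⟶ b)
  | [] => 𝟙 b
  | s :: l => FMD.mapL l ≫ X s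

/-- Compatibility of `FMD.mapL` with concatenation. -/
private def FMD.mcomp :
    ∀ (l₁ l₂ : List S),
      @Iso (b ⟶ b) (Bicategory.homCategory b b) (FMD.mapL b X (l₁ ++ l₂))
        (FMD.mapL b X l₂ ≫ FMD.mapL b X l₁)
  | [], _ => (ρ_ _).symm
  | s :: l₁, l₂ => whiskerRightIso (FMD.mcomp l₁ l₂) (X s) ≪≫ α_ _ _ _

private lemma FMD.mcomp_nil_right : ∀ (F : List S),
    (FMD.mcomp b X F []).hom ≫ (λ_ (FMD.mapL b X F)).hom = eqToHom (by rw [List.append_nil])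
  | [] => by simp [FMD.mcomp, FMD.mapL]
  | s :: F => by
    have ih := FMD.mcomp_nil_right F
    simp only [FMD.mcomp, FMD.mapL, Iso.trans_hom, whiskerRightIso_hom, Category.assoc]
    rw [leftUnitor_comp, Iso.hom_inv_id_assoc, ← comp_whiskerRight, ih, FMD.eqToHom_wr]

private lemma FMD.mcomp_assoc : ∀ (H G F : List S),
    (FMD.mcomp b X H (G ++ F)).hom ≫ (FMD.mcomp b X G F).hom ▷ FMD.mapL b X H ≫
      (α_ (FMD.mapL b X F) (FMD.mapL b X G) (FMD.mapL b X H)).hom ≫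
      FMD.mapL b X F ◁ (FMD.mcomp b X H G).inv ≫ (FMD.mcomp b X (H ++ G) F).inv =
      eqToHom (by rw [List.append_assoc])
  | [], G, F => by simp [FMD.mcomp, FMD.mapL]
  | s :: H, G, F => by
    have ih := FMD.mcomp_assoc H G F
    simp only [FMD.mcomp, FMD.mapL, Iso.trans_hom, Iso.trans_inv, whiskerRightIso_hom,
      whiskerRightIso_inv, Category.assoc, Bicategory.whiskerLeft_comp, List.append_eq, List.cons_append]
    rw [← associator_naturality_left_assoc, ← pentagon_assoc,
      ← Bicategory.whiskerLeft_comp_assoc, Iso.hom_inv_id, Bicategory.whiskerLeft_id,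
      Category.id_comp, ← associator_naturality_middle_assoc, Iso.hom_inv_id_assoc,
      ← comp_whiskerRight_assoc, ← comp_whiskerRight_assoc, ← comp_whiskerRight_assoc,
      ← comp_whiskerRight, Category.assoc, Category.assoc, Category.assoc, ih, FMD.eqToHom_wr]

/-- The pseudofunctor induced by a family of endo-1-morphisms. -/
private def FMD.F : Pseudofunctor (LocallyDiscrete (SingleObj (FreeMonoid S))) B :=
  LocallyDiscrete.mkPseudofunctor (fun _ => b) (fun f => FMD.mapL b X f.toList)
    (fun _ => Iso.refl _) (fun f g => FMD.mcomp b X g.toList f.toList)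
    (fun f g h => FMD.mcomp_assoc b X h.toList g.toList f.toList)
    (fun f => by
      dsimp only [SingleObj.id_as_one, FreeMonoid.toList_one]
      have h := FMD.mcomp_nil_right b X f.toList
      simp at h ⊢
      exact h)
    (fun f => by
      dsimp only [SingleObj.id_as_one, FreeMonoid.toList_one]
      simp [FMD.mcomp]
      exact Iso.inv_hom_id _)

end Aux

/-- Given a bicategory `B`, an object `b` and a family of endo-1-morphisms
`X : S → (b ⟶ b)`, there is a pseudofunctor from the free monoid on `S` (viewed as a one-object
locally discrete bicategory) to `B` sending the unique object to `b` and each generator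
`FreeMonoid.of s` to a 1-morphism isomorphic to `X s`. -/
theorem free_monoid_diagram_extension
    {B : Type*} [Bicategory B] {S : Type*} (b : B) (X : S → (b ⟶ b)) :
    ∃ (F : Pseudofunctor (LocallyDiscrete (SingleObj (FreeMonoid S))) B)
      (e : F.obj (LocallyDiscrete.mk (SingleObj.star (FreeMonoid S))) = b),
      ∀ s : S,
        Nonempty
          (homOfEq
            (F.map (Quiver.Hom.toLoc
              (show SingleObj.star (FreeMonoid S) ⟶ SingleObj.star (FreeMonoid S) from
                FreeMonoid.of s)))
            e e ≅ X s) := by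
  exact ⟨FMD.F b X, rfl, fun s => ⟨Bicategory.leftUnitor (X s)⟩⟩
end
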